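/- Let 1 ≤ a ≤ b ≤ L, let 𝐁 : [a,b] → ℝ³ be a field, and set V = Σ_{x=a}^{b} 𝐁(x)·𝐒_x. Let H^Ising_{[a,b]} = Σ_{x=a}^{b−1} h^Ising_{x,x+1} denote the Ising kink Hamiltonian on the sub-chain ⊗_{x=a}^{b} ℂ². If ψ_{[a,b]} is a ground state of H^Ising_{[a,b]} + V with lowest eigenvalue E, then ψ = |↓⟩^{⊗(a−1)} ⊗ ψ_{[a,b]} ⊗ |↑⟩^{⊗(L−b)} is an eigenvector of the full-chain Hamiltonian H^Ising + V on ℋ_L with eigenvalue E, and E is the lowest eigenvalue of H^Ising + V, i.e., ψ is a ground state of H^Ising + V. -/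

import Mathlib

open Matrix Finset
open scoped ComplexOrder

noncomputable section

/-- Configuration space of a chain of `L` spins-1/2: `ℋ_L = ⊗_{x=1}^L ℂ²`
is identified with functions `Conf L → ℂ`. Value `0` is spin up `|↑⟩`,
value `1` is spin down `|↓⟩`. -/
abbrev Conf (L : ℕ) := Fin L → Fin 2

def S1 : Matrix (Fin 2) (Fin 2) ℂ := !![0, 1/2; 1/2, 0]
def S2 : Matrix (Fin 2) (Fin 2) ℂ := !![0, -Complex.I/2; Complex.I/2, 0]
def S3 : Matrix (Fin 2) (Fin 2) ℂ := !![1/2, 0; 0, -1/2]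

/-- The one-site operator `A` acting on the `x`-th (0-based) tensor factor of `ℋ_L`. -/
def siteOp (L : ℕ) (A : Matrix (Fin 2) (Fin 2) ℂ) (x : ℕ) :
    Matrix (Conf L) (Conf L) ℂ :=
  fun m n =>
    if hx : x < L then
      A (m ⟨x, hx⟩) (n ⟨x, hx⟩) *
        ∏ y ∈ Finset.univ.erase (⟨x, hx⟩ : Fin L), (if m y = n y then 1 else 0)
    else 0

/-- The Ising bond interaction `h^Ising_{x,x+1}` (with `x` 0-based). -/
def hIsing (L : ℕ) (x : ℕ) : Matrix (Conf L) (Conf L) ℂ :=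
  -(siteOp L S3 x * siteOp L S3 (x + 1))
    + ((1 / 2 : ℝ) : ℂ) • (siteOp L S3 x - siteOp L S3 (x + 1))
    + ((1 / 4 : ℝ) : ℂ) • 1

/-- The Ising kink Hamiltonian `H^Ising = ∑_{x=1}^{L-1} h^Ising_{x,x+1}`. -/
def HIsing (L : ℕ) : Matrix (Conf L) (Conf L) ℂ :=
  ∑ x ∈ Finset.range (L - 1), hIsing L x

/-- The set of (real) eigenvalues of a matrix. -/
def eigSet {n : Type*} [Fintype n] [DecidableEq n] (H : Matrix n n ℂ) : Set ℝ :=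
  {μ : ℝ | ∃ ψ : n → ℂ, ψ ≠ 0 ∧ H.mulVec ψ = (μ : ℂ) • ψ}

/-- Euclidean norm of `𝐁(x) ∈ ℝ³`. -/
def bnorm (b : Fin 3 → ℝ) : ℝ := Real.sqrt (b 0 ^ 2 + b 1 ^ 2 + b 2 ^ 2)

/-- The magnetic field term `𝐁(x)·𝐒_x` at (0-based) site `x`. -/
def fieldOp (L : ℕ) (b : Fin 3 → ℝ) (x : ℕ) : Matrix (Conf L) (Conf L) ℂ :=
  (b 0 : ℂ) • siteOp L S1 x + (b 1 : ℂ) • siteOp L S2 x + (b 2 : ℂ) • siteOp L S3 x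

/-- The vector `|↓⟩^{⊗(a−1)} ⊗ ψ_{[a,b]} ⊗ |↑⟩^{⊗(L−b)}` on the chain of length `L`,
where `ψ` lives on the sub-chain of the paper's sites `a,…,b` (0-based full-chain
sites `a-1,…,b-1`). -/
def embedSub (L a b : ℕ) (ha : 1 ≤ a) (hab : a ≤ b) (hbL : b ≤ L)
    (ψ : Conf (b - a + 1) → ℂ) : Conf L → ℂ :=
  fun m => ψ (fun i => m ⟨a - 1 + i.1, by have := i.2; omega⟩) *
    ∏ x : Fin L,
      if x.1 < a - 1 then (if m x = 1 then 1 else 0)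
      else if b ≤ x.1 then (if m x = 0 then 1 else 0)
      else 1

/-!
Write `o = a - 1` and `k = b - a + 1`. Splitting the chain into the block `[o, o + k)` and the
outer sites identifies `ℋ_L` with `ℂ^(outer configurations) ⊗ ℋ_k`, and then
`H^Ising + V = 1 ⊗ (H^Ising_{[a,b]} + V) + R`, where `R` is the sum of the bonds not contained
in the block. Every bond is diagonal with entries `0, 1` (only `↑↓` costs energy), so `R ≥ 0`, and
`R` vanishes on `|↓…↓⟩ ⊗ φ ⊗ |↑…↑⟩` for every `φ`. Hence these vectors carry every eigenvalue of
the block Hamiltonian over to the full one, while `H^Ising + V - E ≥ 1 ⊗ (H^Ising_{[a,b]} + V - E)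
≥ 0` shows that no eigenvalue of the full Hamiltonian lies below `E`.
-/

open scoped Kronecker

namespace Matrix

section LiftSnd

variable {R : Type*} [CommSemiring R] {n m p : Type*}

def prodVec (e : n ≃ m × p) (u : m → R) (v : p → R) : n → R := fun i => u (e i).1 * v (e i).2

lemma prodVec_smul (e : n ≃ m × p) (u : m → R) (c : R) (v : p → R) :
    prodVec e u (c • v) = c • prodVec e u v := by
  funext i
  simp only [prodVec, Pi.smul_apply, smul_eq_mul]
  ring

lemma prodVec_ne_zero [NoZeroDivisors R] (e : n ≃ m × p) {u : m → R} {v : p → R}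
    (hu : u ≠ 0) (hv : v ≠ 0) : prodVec e u v ≠ 0 := by
  obtain ⟨σ, hσ⟩ := Function.ne_iff.mp hu
  obtain ⟨r, hr⟩ := Function.ne_iff.mp hv
  refine Function.ne_iff.mpr ⟨e.symm (σ, r), ?_⟩
  simpa [prodVec] using mul_ne_zero hσ hr

variable [Fintype n] [DecidableEq n] [Fintype m] [DecidableEq m] [Fintype p] [DecidableEq p]

def liftSnd (e : n ≃ m × p) : Matrix p p R →ₐ[R] Matrix n n R where
  toFun A := ((1 : Matrix m m R) ⊗ₖ A).submatrix e e
  map_one' := by simp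
  map_mul' A B := by simp [submatrix_mul_equiv, ← mul_kronecker_mul]
  map_zero' := by simp
  map_add' A B := by simp [kronecker_add, submatrix_add]
  commutes' c := by simp [Algebra.algebraMap_eq_smul_one, kronecker_smul, submatrix_smul]

lemma liftSnd_apply (e : n ≃ m × p) (A : Matrix p p R) (i j : n) :
    liftSnd e A i j = (1 : Matrix m m R) (e i).1 (e j).1 * A (e i).2 (e j).2 := rfl

lemma liftSnd_mulVec_prodVec (e : n ≃ m × p) (A : Matrix p p R) (u : m → R) (v : p → R) :
    liftSnd e A *ᵥ prodVec e u v = prodVec e u (A *ᵥ v) := by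
  funext i
  simp [liftSnd_apply, prodVec, mulVec, dotProduct, ← e.symm.sum_comp, Fintype.sum_prod_type,
    one_apply, Finset.mul_sum, mul_left_comm]

end LiftSnd

lemma PosSemidef.liftSnd {𝕜 : Type*} [RCLike 𝕜] {n m p : Type*} [Fintype n] [DecidableEq n]
    [Fintype m] [DecidableEq m] [Fintype p] [DecidableEq p] (e : n ≃ m × p)
    {A : Matrix p p 𝕜} (hA : A.PosSemidef) : (liftSnd e A).PosSemidef :=
  (PosSemidef.one.kronecker hA).submatrix e

lemma isHermitian_ofReal_smul_one {n : Type*} [DecidableEq n] (c : ℝ) :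
    ((c : ℂ) • (1 : Matrix n n ℂ)).IsHermitian := by
  simp [IsHermitian, conjTranspose_smul]

end Matrix

section EigSet

variable {n : Type*} [Fintype n] [DecidableEq n] {H : Matrix n n ℂ}

lemma mem_eigSet_sub_smul_one_iff {μ c : ℝ} :
    μ ∈ eigSet (H - (c : ℂ) • 1) ↔ μ + c ∈ eigSet H := by
  simp only [eigSet, Set.mem_ofPred_eq, sub_mulVec, smul_mulVec, one_mulVec, sub_eq_iff_eq_add,
    ← add_smul, Complex.ofReal_add]

lemma Matrix.IsHermitian.eigenvalues_mem_eigSet (hH : H.IsHermitian) (i : n) :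
    hH.eigenvalues i ∈ eigSet H := by
  refine ⟨⇑(hH.eigenvectorBasis i), by simpa using hH.eigenvectorBasis.orthonormal.ne_zero i, ?_⟩
  rw [hH.mulVec_eigenvectorBasis, RCLike.real_smul_eq_coe_smul (K := ℂ)]
  rfl

lemma Matrix.PosSemidef.nonneg_of_mem_eigSet (hH : H.PosSemidef) {μ : ℝ} (hμ : μ ∈ eigSet H) :
    0 ≤ μ := by
  obtain ⟨φ, hφ, hHφ⟩ := hμ
  have h := hH.dotProduct_mulVec_nonneg φ
  rw [hHφ, dotProduct_smul, smul_eq_mul] at h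
  have hpos : 0 < star φ ⬝ᵥ φ := dotProduct_star_self_pos_iff.mpr hφ
  by_contra! hneg
  exact (mul_neg_of_neg_of_pos (by exact_mod_cast hneg) hpos).not_ge h

lemma posSemidef_sub_smul_one_of_mem_lowerBounds (hH : H.IsHermitian) {c : ℝ}
    (hc : c ∈ lowerBounds (eigSet H)) : (H - (c : ℂ) • 1).PosSemidef := by
  have hM := hH.sub (isHermitian_ofReal_smul_one c)
  refine hM.posSemidef_iff_eigenvalues_nonneg.mpr fun i => ?_
  have := hc (mem_eigSet_sub_smul_one_iff.mp (hM.eigenvalues_mem_eigSet i))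
  simpa using this

lemma mem_lowerBounds_eigSet_of_posSemidef {c : ℝ} (h : (H - (c : ℂ) • 1).PosSemidef) :
    c ∈ lowerBounds (eigSet H) := fun μ hμ => by
  have := h.nonneg_of_mem_eigSet (mem_eigSet_sub_smul_one_iff.mpr (by rwa [sub_add_cancel]))
  linarith

end EigSet

section GroundState

variable {n m p : Type*} [Fintype n] [DecidableEq n] [Fintype m] [DecidableEq m]
  [Fintype p] [DecidableEq p] (e : n ≃ m × p) {A : Matrix p p ℂ} {R : Matrix n n ℂ} {u : m → ℂ}

lemma liftSnd_add_mulVec_prodVec {v : p → ℂ} (hRu : R *ᵥ prodVec e u v = 0) :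
    (liftSnd e A + R) *ᵥ prodVec e u v = prodVec e u (A *ᵥ v) := by
  rw [add_mulVec, liftSnd_mulVec_prodVec, hRu, add_zero]

lemma eigSet_subset_eigSet_liftSnd_add (hu : u ≠ 0) (hRu : ∀ v, R *ᵥ prodVec e u v = 0) :
    eigSet A ⊆ eigSet (liftSnd e A + R) := fun _ ⟨v, hv, hAv⟩ =>
  ⟨prodVec e u v, prodVec_ne_zero e hu hv, by
    rw [liftSnd_add_mulVec_prodVec e (hRu v), hAv, prodVec_smul]⟩

theorem isLeast_eigSet_liftSnd_add (hA : A.IsHermitian) (hR : R.PosSemidef) (hu : u ≠ 0)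
    (hRu : ∀ v, R *ᵥ prodVec e u v = 0) {E : ℝ} (hE : IsLeast (eigSet A) E) :
    IsLeast (eigSet (liftSnd e A + R)) E := by
  refine ⟨eigSet_subset_eigSet_liftSnd_add e hu hRu hE.1, mem_lowerBounds_eigSet_of_posSemidef ?_⟩
  have hsplit : liftSnd e A + R - (E : ℂ) • 1 = liftSnd e (A - (E : ℂ) • 1) + R := by
    rw [map_sub, map_smul, map_one]
    abel
  rw [hsplit]
  exact ((posSemidef_sub_smul_one_of_mem_lowerBounds hA hE.2).liftSnd e).add hR

end GroundState

section SpinChain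

variable {L : ℕ}

lemma S3_eq_diagonal : S3 = diagonal ![1 / 2, -1 / 2] := by
  ext i j
  fin_cases i <;> fin_cases j <;> simp [S3]

lemma siteOp_diagonal (d : Fin 2 → ℂ) (x : Fin L) :
    siteOp L (diagonal d) x = diagonal fun m => d (m x) := by
  ext m n
  have hagree : (m x = n x ∧ ∀ y ∈ Finset.univ.erase x, m y = n y) ↔ m = n := by
    refine ⟨fun h => funext fun y => ?_, fun h => by simp [h]⟩
    by_cases hy : y = x
    · exact hy ▸ h.1
    · exact h.2 y (by simp [hy])
  simp only [siteOp, dif_pos x.2, Fin.eta, Finset.prod_boole, diagonal_apply,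
    ite_zero_mul_ite_zero, mul_one, hagree]

def kinkEnergy (s t : Fin 2) : ℂ := if s = 0 ∧ t = 1 then 1 else 0

lemma hIsing_eq_diagonal (x : ℕ) (hx : x + 1 < L) :
    hIsing L x = diagonal fun m => kinkEnergy (m ⟨x, by omega⟩) (m ⟨x + 1, hx⟩) := by
  rw [hIsing, S3_eq_diagonal, siteOp_diagonal _ ⟨x, by omega⟩, siteOp_diagonal _ ⟨x + 1, hx⟩]
  ext m n
  rcases eq_or_ne m n with rfl | hmn
  · simp only [Matrix.add_apply, Matrix.neg_apply, Matrix.smul_apply, Matrix.sub_apply,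
      diagonal_mul_diagonal, diagonal_apply_eq, one_apply_eq]
    generalize m ⟨x, by omega⟩ = s, m ⟨x + 1, hx⟩ = t
    fin_cases s <;> fin_cases t <;> norm_num [kinkEnergy]
  · simp [diagonal_apply_ne _ hmn, one_apply_ne hmn]

lemma hIsing_posSemidef (x : ℕ) (hx : x + 1 < L) : (hIsing L x).PosSemidef := by
  rw [hIsing_eq_diagonal x hx]
  refine PosSemidef.diagonal fun m => ?_
  simp only [kinkEnergy, Pi.zero_apply]
  split_ifs <;> norm_num

lemma hIsing_mulVec_eq_zero (x : ℕ) (hx : x + 1 < L) {φ : Conf L → ℂ}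
    (hφ : ∀ m, φ m ≠ 0 → kinkEnergy (m ⟨x, by omega⟩) (m ⟨x + 1, hx⟩) = 0) :
    hIsing L x *ᵥ φ = 0 := by
  rw [hIsing_eq_diagonal x hx]
  funext m
  rw [mulVec_diagonal, Pi.zero_apply]
  by_cases hm : φ m = 0
  · rw [hm, mul_zero]
  · rw [hφ m hm, zero_mul]

lemma HIsing_posSemidef : (HIsing L).PosSemidef :=
  posSemidef_sum _ fun x hx => hIsing_posSemidef x (by have := Finset.mem_range.mp hx; omega)

lemma siteOp_conjTranspose (A : Matrix (Fin 2) (Fin 2) ℂ) (x : ℕ) :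
    (siteOp L A x)ᴴ = siteOp L Aᴴ x := by
  ext m n
  by_cases hx : x < L
  · simp [siteOp, hx, Finset.prod_boole, eq_comm, apply_ite (starRingEnd ℂ)]
  · simp [siteOp, hx]

lemma fieldOp_isHermitian (b : Fin 3 → ℝ) (x : ℕ) : (fieldOp L b x).IsHermitian := by
  have hS1 : S1ᴴ = S1 := by ext i j; fin_cases i <;> fin_cases j <;> simp [S1]
  have hS2 : S2ᴴ = S2 := by ext i j; fin_cases i <;> fin_cases j <;> simp [S2]
  have hS3 : S3ᴴ = S3 := by ext i j; fin_cases i <;> fin_cases j <;> simp [S3]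
  simp [IsHermitian, fieldOp, conjTranspose_smul, siteOp_conjTranspose, hS1, hS2, hS3]

end SpinChain

section Block

variable {L k : ℕ} (ι : Fin k ↪ Fin L)

abbrev OuterSite := {y : Fin L // y ∉ Set.range ι}

def siteSplit : Fin k ⊕ OuterSite ι ≃ Fin L :=
  (Equiv.sumCongr (Equiv.ofInjective ι ι.injective) (Equiv.refl _)).trans
    (Equiv.sumCompl (· ∈ Set.range ι))

def confSplit : Conf L ≃ (OuterSite ι → Fin 2) × Conf k :=
  (Equiv.arrowCongr (siteSplit ι).symm (Equiv.refl _)).trans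
    ((Equiv.sumArrowEquivProdArrow _ _ _).trans (Equiv.prodComm _ _))

@[simp] lemma confSplit_apply_fst (m : Conf L) (y : OuterSite ι) :
    (confSplit ι m).1 y = m y := rfl

@[simp] lemma confSplit_apply_snd (m : Conf L) (i : Fin k) : (confSplit ι m).2 i = m (ι i) := rfl

@[simp] lemma siteSplit_inl (i : Fin k) : siteSplit ι (Sum.inl i) = ι i := rfl

@[simp] lemma siteSplit_inr (y : OuterSite ι) : siteSplit ι (Sum.inr y) = y := rfl

lemma forall_mem_erase_iff_confSplit (m n : Conf L) (x : Fin k) :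
    (∀ y ∈ Finset.univ.erase (ι x), m y = n y) ↔
      (confSplit ι m).1 = (confSplit ι n).1 ∧
        ∀ j ∈ Finset.univ.erase x, (confSplit ι m).2 j = (confSplit ι n).2 j := by
  simp only [Finset.mem_erase, Finset.mem_univ, and_true, funext_iff, confSplit_apply_fst,
    confSplit_apply_snd]
  refine ⟨fun h => ⟨fun y => h y fun hy => y.2 ⟨x, hy.symm⟩, fun j hj => h _ (ι.injective.ne hj)⟩,
    fun ⟨hout, hin⟩ y hy => ?_⟩
  by_cases hr : y ∈ Set.range ι
  · obtain ⟨j, rfl⟩ := hr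
    exact hin j fun hj => hy (hj ▸ rfl)
  · exact hout ⟨y, hr⟩

lemma siteOp_embedding (A : Matrix (Fin 2) (Fin 2) ℂ) (x : Fin k) :
    siteOp L A (ι x) = liftSnd (confSplit ι) (siteOp k A x) := by
  ext m n
  simp only [liftSnd_apply, siteOp, dif_pos (ι x).2, dif_pos x.2, Fin.eta, Finset.prod_boole,
    forall_mem_erase_iff_confSplit, one_apply, ite_and]
  split_ifs <;> simp

lemma fieldOp_embedding (b : Fin 3 → ℝ) (x : Fin k) :
    fieldOp L b (ι x) = liftSnd (confSplit ι) (fieldOp k b x) := by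
  simp only [fieldOp, map_add, map_smul, siteOp_embedding]

end Block

section Interval

variable {L o k : ℕ} (hok : o + k ≤ L)

abbrev blockEmb : Fin k ↪ Fin L := (Fin.natAddEmb o).trans (Fin.castLEEmb hok)

lemma mem_range_blockEmb_iff (y : Fin L) :
    y ∈ Set.range (blockEmb hok) ↔ o ≤ y ∧ (y : ℕ) < o + k := by
  refine ⟨?_, fun h => ⟨⟨y - o, by omega⟩, Fin.ext (show o + (y - o) = y by omega)⟩⟩
  rintro ⟨i, rfl⟩
  simp

lemma siteOp_add_eq_liftSnd (A : Matrix (Fin 2) (Fin 2) ℂ) (x : ℕ) (hx : x < k) :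
    siteOp L A (o + x) = liftSnd (confSplit (blockEmb hok)) (siteOp k A x) :=
  siteOp_embedding (blockEmb hok) A ⟨x, hx⟩

lemma fieldOp_add_eq_liftSnd (b : Fin 3 → ℝ) (x : ℕ) (hx : x < k) :
    fieldOp L b (o + x) = liftSnd (confSplit (blockEmb hok)) (fieldOp k b x) :=
  fieldOp_embedding (blockEmb hok) b ⟨x, hx⟩

lemma hIsing_add_eq_liftSnd (x : ℕ) (hx : x + 1 < k) :
    hIsing L (o + x) = liftSnd (confSplit (blockEmb hok)) (hIsing k x) := by
  simp only [hIsing, map_add, map_neg, map_mul, map_smul, map_sub, map_one,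
    ← siteOp_add_eq_liftSnd hok _ _ (Nat.lt_of_succ_lt hx), ← siteOp_add_eq_liftSnd hok _ _ hx,
    add_assoc]

-- The bonds `x` (joining sites `x` and `x + 1`) with an endpoint outside the block `[o, o + k)`.
def outerBonds (L o k : ℕ) : Matrix (Conf L) (Conf L) ℂ :=
  ∑ x ∈ Finset.range o, hIsing L x + ∑ x ∈ Finset.Ico (o + k - 1) (L - 1), hIsing L x

lemma HIsing_eq_liftSnd_add_outerBonds (hk : 0 < k) :
    HIsing L = liftSnd (confSplit (blockEmb hok)) (HIsing k) + outerBonds L o k := by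
  rw [HIsing, HIsing, map_sum, outerBonds,
    ← Finset.sum_range_add_sum_Ico _ (show o + k - 1 ≤ L - 1 by omega),
    ← Finset.sum_range_add_sum_Ico _ (show o ≤ o + k - 1 by omega), Finset.sum_Ico_eq_sum_range,
    show o + k - 1 - o = k - 1 by omega,
    Finset.sum_congr rfl fun x hx => hIsing_add_eq_liftSnd hok x (by
      have := Finset.mem_range.mp hx; omega)]
  abel

lemma outerBonds_posSemidef (hoL : o < L) : (outerBonds L o k).PosSemidef :=
  (posSemidef_sum _ fun x hx => hIsing_posSemidef x (by
      have := Finset.mem_range.mp hx; omega)).add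
    (posSemidef_sum _ fun x hx => hIsing_posSemidef x (by
      have := (Finset.mem_Ico.mp hx).2; omega))

-- The outer factor `|↓⟩^{⊗o} ⊗ |↑⟩^{⊗(L-o-k)}` of the paper's embedded vector.
def kinkState : (OuterSite (blockEmb hok) → Fin 2) → ℂ := fun σ =>
  ∏ y : OuterSite (blockEmb hok),
    if ((y : Fin L) : ℕ) < o then (if σ y = 1 then 1 else 0) else (if σ y = 0 then 1 else 0)

lemma kinkState_ne_zero : kinkState hok ≠ 0 := by
  refine Function.ne_iff.mpr ⟨fun y => if ((y : Fin L) : ℕ) < o then 1 else 0, ?_⟩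
  rw [kinkState, Finset.prod_eq_one fun y _ => by
    by_cases hy : ((y : Fin L) : ℕ) < o <;> simp [hy]]
  exact one_ne_zero

lemma eq_of_prodVec_kinkState_ne_zero {v : Conf k → ℂ} {m : Conf L}
    (hm : prodVec (confSplit (blockEmb hok)) (kinkState hok) v m ≠ 0) (y : Fin L) :
    ((y : ℕ) < o → m y = 1) ∧ (o + k ≤ y → m y = 0) := by
  have hσ := left_ne_zero_of_mul hm
  rw [kinkState, Finset.prod_ne_zero_iff] at hσ
  refine ⟨fun hy => ?_, fun hy => ?_⟩
  · have h := hσ ⟨y, by rw [mem_range_blockEmb_iff]; omega⟩ (Finset.mem_univ _)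
    rw [if_pos hy] at h
    exact (ite_ne_right_iff.mp h).1
  · have h := hσ ⟨y, by rw [mem_range_blockEmb_iff]; omega⟩ (Finset.mem_univ _)
    rw [if_neg (show ¬(y : ℕ) < o by omega)] at h
    exact (ite_ne_right_iff.mp h).1

lemma outerBonds_mulVec_prodVec_kinkState (hk : 0 < k) (v : Conf k → ℂ) :
    outerBonds L o k *ᵥ prodVec (confSplit (blockEmb hok)) (kinkState hok) v = 0 := by
  rw [outerBonds, add_mulVec, sum_mulVec, sum_mulVec, Finset.sum_eq_zero fun x hx => ?_,
    Finset.sum_eq_zero fun x hx => ?_, add_zero]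
  · simp only [Finset.mem_Ico] at hx
    refine hIsing_mulVec_eq_zero x (by omega) fun m hm => ?_
    rw [(eq_of_prodVec_kinkState_ne_zero hok hm ⟨x + 1, by omega⟩).2 (show o + k ≤ x + 1 by omega)]
    simp [kinkEnergy]
  · simp only [Finset.mem_range] at hx
    refine hIsing_mulVec_eq_zero x (by omega) fun m hm => ?_
    rw [(eq_of_prodVec_kinkState_ne_zero hok hm ⟨x, by omega⟩).1 hx]
    simp [kinkEnergy]

lemma HIsing_add_sum_fieldOp_eq (hk : 0 < k) (f : ℕ → Fin 3 → ℝ) :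
    HIsing L + ∑ x ∈ Finset.range k, fieldOp L (f x) (o + x) =
      liftSnd (confSplit (blockEmb hok)) (HIsing k + ∑ x ∈ Finset.range k, fieldOp k (f x) x) +
        outerBonds L o k := by
  rw [HIsing_eq_liftSnd_add_outerBonds hok hk, map_add, map_sum,
    Finset.sum_congr rfl fun x hx => fieldOp_add_eq_liftSnd hok (f x) x (by simpa using hx)]
  abel

lemma isHermitian_HIsing_add_sum_fieldOp {k : ℕ} (f : ℕ → Fin 3 → ℝ) :
    (HIsing k + ∑ x ∈ Finset.range k, fieldOp k (f x) x).IsHermitian :=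
  HIsing_posSemidef.isHermitian.add (isSelfAdjoint_sum _ fun x _ => fieldOp_isHermitian (f x) x)

end Interval

lemma embedSub_eq_prodVec {L a b : ℕ} (ha : 1 ≤ a) (hab : a ≤ b) (hbL : b ≤ L)
    (hok : a - 1 + (b - a + 1) ≤ L) (ψ : Conf (b - a + 1) → ℂ) :
    embedSub L a b ha hab hbL ψ = prodVec (confSplit (blockEmb hok)) (kinkState hok) ψ := by
  funext m
  rw [embedSub, prodVec, mul_comm, kinkState, ← (siteSplit _).prod_comp, Fintype.prod_sum_type,
    Finset.prod_eq_one fun j _ => ?_, one_mul]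
  · congr 1
    refine Finset.prod_congr rfl fun y _ => ?_
    have hy := (mem_range_blockEmb_iff hok y).not.mp y.2
    by_cases hlt : ((y : Fin L) : ℕ) < a - 1
    · rw [siteSplit_inr, confSplit_apply_fst, if_pos hlt, if_pos hlt]
    · rw [siteSplit_inr, confSplit_apply_fst, if_neg hlt, if_neg hlt, if_pos (by omega)]
  · rw [siteSplit_inl, if_neg (by simp), if_neg (by simp; omega)]

theorem ising_ground_state_embedding_general
    (L a b : ℕ) (ha : 1 ≤ a) (hab : a ≤ b) (hbL : b ≤ L)
    (B : ℕ → Fin 3 → ℝ)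
    (ψ : Conf (b - a + 1) → ℂ) (E : ℝ)
    (heig : (HIsing (b - a + 1)
        + ∑ x ∈ Finset.range (b - a + 1), fieldOp (b - a + 1) (B (a + x)) x).mulVec ψ
      = (E : ℂ) • ψ)
    (hleast : IsLeast (eigSet (HIsing (b - a + 1)
        + ∑ x ∈ Finset.range (b - a + 1), fieldOp (b - a + 1) (B (a + x)) x)) E) :
    (HIsing L
        + ∑ x ∈ Finset.range (b - a + 1), fieldOp L (B (a + x)) (a - 1 + x)).mulVec
        (embedSub L a b ha hab hbL ψ)
      = (E : ℂ) • embedSub L a b ha hab hbL ψ ∧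
    IsLeast (eigSet (HIsing L
        + ∑ x ∈ Finset.range (b - a + 1), fieldOp L (B (a + x)) (a - 1 + x))) E := by
  have hok : a - 1 + (b - a + 1) ≤ L := by omega
  have hRu := outerBonds_mulVec_prodVec_kinkState hok (Nat.succ_pos _)
  rw [HIsing_add_sum_fieldOp_eq hok (Nat.succ_pos _) fun x => B (a + x),
    embedSub_eq_prodVec ha hab hbL hok]
  refine ⟨?_, isLeast_eigSet_liftSnd_add _ (isHermitian_HIsing_add_sum_fieldOp _)
    (outerBonds_posSemidef (by omega)) (kinkState_ne_zero hok) hRu hleast⟩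
  rw [liftSnd_add_mulVec_prodVec _ (hRu ψ), heig, prodVec_smul]

/-- if `ψ_{[a,b]}` is a ground state, with lowest eigenvalue `E`, of the
Ising kink Hamiltonian plus field `V = ∑_{x=a}^b 𝐁(x)·𝐒_x` on the sub-chain `[a,b]`,
then `|↓⟩^{⊗(a−1)} ⊗ ψ_{[a,b]} ⊗ |↑⟩^{⊗(L−b)}` is an eigenvector of the full-chain
Hamiltonian `H^Ising + V` with eigenvalue `E`, and `E` is the lowest eigenvalue of
`H^Ising + V`, i.e. this vector is a ground state of `H^Ising + V`. -/
theorem ising_ground_state_embedding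
    (L a b : ℕ) (hL : 2 ≤ L) (ha : 1 ≤ a) (hab : a ≤ b) (hbL : b ≤ L)
    (B : ℕ → Fin 3 → ℝ)
    (ψ : Conf (b - a + 1) → ℂ) (E : ℝ)
    (hψ0 : ψ ≠ 0)
    (heig : (HIsing (b - a + 1)
        + ∑ x ∈ Finset.range (b - a + 1), fieldOp (b - a + 1) (B (a + x)) x).mulVec ψ
      = (E : ℂ) • ψ)
    (hleast : IsLeast (eigSet (HIsing (b - a + 1)
        + ∑ x ∈ Finset.range (b - a + 1), fieldOp (b - a + 1) (B (a + x)) x)) E) :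
    (HIsing L
        + ∑ x ∈ Finset.range (b - a + 1), fieldOp L (B (a + x)) (a - 1 + x)).mulVec
        (embedSub L a b ha hab hbL ψ)
      = (E : ℂ) • embedSub L a b ha hab hbL ψ ∧
    IsLeast (eigSet (HIsing L
        + ∑ x ∈ Finset.range (b - a + 1), fieldOp L (B (a + x)) (a - 1 + x))) E :=
  ising_ground_state_embedding_general L a b ha hab hbL B ψ E heig hleast
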